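/- Suppose p : ℝ → (1,∞) is slowly oscillating with 1 < inf p ≤ sup p < ∞. Let (h_k) tend to +∞ with p(h_k) → q ∈ (1,∞). Suppose w, w_k are continuous, w_k → w uniformly on compact sets, and |w(x)|, |w_k(x)| ≤ C/(1+|x|) for some C > 0 and all k, x. Then ‖V_{h_k} w_k‖_{p(·)} → ‖w‖_{L^q(ℝ)} as k → ∞, where (V_h f)(x) := f(x-h) and ‖·‖_{p(·)} is the Luxemburg norm on the variable Lebesgue space L^{p(·)}(ℝ). -/

import Mathlib

open Filter Set MeasureTheory

/-- Oscillation of a real function on a set. -/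
noncomputable def oscR (f : ℝ → ℝ) (J : Set ℝ) : ℝ :=
  ⨆ t ∈ J, ⨆ τ ∈ J, |f t - f τ|

/-- The modular `I_{p(·)}(f) = ∫ |f(x)|^{p(x)} dx` of the variable Lebesgue space. -/
noncomputable def vlModular (p : ℝ → ℝ) (f : ℝ → ℂ) : ENNReal :=
  ∫⁻ x : ℝ, ENNReal.ofReal (‖f x‖ ^ p x)

/-- The Luxemburg norm `‖f‖_{p(·)} = inf{λ > 0 : I_{p(·)}(f/λ) ≤ 1}`. -/
noncomputable def luxNorm (p : ℝ → ℝ) (f : ℝ → ℂ) : ℝ :=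
  sInf {l : ℝ | 0 < l ∧ vlModular p (fun x => f x / (l : ℂ)) ≤ 1}

/-!
After the change of variables `x ↦ x + h_k`, the modular of `V_{h_k} w_k / λ` is
`∫ (|w_k(x)|/λ)^{p(x + h_k)} dx`. Slow oscillation forces `p(x + h_k) → q` for every fixed `x`, and
the decay `C/(1+|x|)` gives the integrable majorant `(1+|x|)^{-inf p}`, so by dominated convergence
the modular tends to `‖w‖_q^q / λ^q` for every `λ > 0`. Since the modular is antitone in `λ`, the
Luxemburg norms, which are the infima of the `λ` with modular `≤ 1`, then converge to `‖w‖_q`.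
-/

open Topology

theorem abs_sub_le_oscR {f : ℝ → ℝ} {J : Set ℝ} {M : ℝ}
    (hM : ∀ t ∈ J, ∀ τ ∈ J, |f t - f τ| ≤ M) {t τ : ℝ} (ht : t ∈ J) (hτ : τ ∈ J) :
    |f t - f τ| ≤ oscR f J := by
  have hbound : ∀ t ∈ J, ∀ τ, (⨆ _ : τ ∈ J, |f t - f τ|) ≤ max M 0 := fun t ht τ =>
    Real.iSup_le (fun hτ => le_max_of_le_left (hM t ht τ hτ)) (le_max_right _ _)
  have hinner : BddAbove (range fun τ => ⨆ _ : τ ∈ J, |f t - f τ|) :=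
    ⟨max M 0, forall_mem_range.2 (hbound t ht)⟩
  have houter : BddAbove (range fun t => ⨆ _ : t ∈ J, ⨆ τ ∈ J, |f t - f τ|) :=
    ⟨max M 0, forall_mem_range.2 fun t => Real.iSup_le
      (fun ht => Real.iSup_le (hbound t ht) (le_max_right _ _)) (le_max_right _ _)⟩
  calc |f t - f τ| = ⨆ _ : τ ∈ J, |f t - f τ| :=
      (ciSup_pos (f := fun _ => |f t - f τ|) hτ).symm
    _ ≤ ⨆ τ ∈ J, |f t - f τ| := le_ciSup hinner τ
    _ = ⨆ _ : t ∈ J, ⨆ τ ∈ J, |f t - f τ| :=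
      (ciSup_pos (f := fun _ => ⨆ τ ∈ J, |f t - f τ|) ht).symm
    _ ≤ oscR f J := le_ciSup houter t

theorem tendsto_comp_add_of_tendsto_oscR {p : ℝ → ℝ} {M : ℝ} (hM : ∀ t τ, |p t - p τ| ≤ M)
    (hSO : Tendsto (fun y => oscR p (Icc (-2 * y) (-y) ∪ Icc y (2 * y))) atTop (𝓝 0))
    {ι : Type*} {L : Filter ι} {h : ι → ℝ} (hh : Tendsto h L atTop) {q : ℝ}
    (hq : Tendsto (fun k => p (h k)) L (𝓝 q)) (x : ℝ) :
    Tendsto (fun k => p (x + h k)) L (𝓝 q) := by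
  -- once `h k ≥ 3|x|`, both `h k` and `x + h k` lie in `[y, 2y]` for `y = h k - |x|`
  have hosc := hSO.comp (tendsto_atTop_add_const_right L (-|x|) hh)
  have hdiff : Tendsto (fun k => p (x + h k) - p (h k)) L (𝓝 0) := by
    refine squeeze_zero_norm' ?_ hosc
    filter_upwards [hh.eventually_ge_atTop (3 * |x|)] with k hk
    refine abs_sub_le_oscR (fun t _ τ _ => hM t τ) (Or.inr ⟨?_, ?_⟩) (Or.inr ⟨?_, ?_⟩) <;>
      linarith [le_abs_self x, neg_abs_le x, abs_nonneg x]
  simpa using hdiff.add hq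

theorem rpow_le_max_rpow_mul_rpow_neg {b c y s pm pP : ℝ} (hb : 0 ≤ b) (hbc : b ≤ c / y)
    (hy : 1 ≤ y) (hpm : 0 ≤ pm) (hs : s ∈ Icc pm pP) :
    b ^ s ≤ max c 1 ^ pP * y ^ (-pm) := by
  have hy0 : 0 < y := one_pos.trans_le hy
  have hc : 0 ≤ c := by simpa using (le_div_iff₀ hy0).1 (hb.trans hbc)
  have hs0 : 0 ≤ s := hpm.trans hs.1
  calc b ^ s ≤ (c / y) ^ s := Real.rpow_le_rpow hb hbc hs0
    _ = c ^ s / y ^ s := Real.div_rpow hc hy0.le s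
    _ ≤ max c 1 ^ pP / y ^ pm :=
      div_le_div₀ (by positivity) ((Real.rpow_le_rpow hc (le_max_left c 1) hs0).trans
          (Real.rpow_le_rpow_of_exponent_le (le_max_right c 1) hs.2))
        (by positivity) (Real.rpow_le_rpow_of_exponent_le hy hs.1)
    _ = max c 1 ^ pP * y ^ (-pm) := by rw [Real.rpow_neg hy0.le, div_eq_mul_inv]

theorem integrable_one_add_abs_rpow_neg {r : ℝ} (hr : 1 < r) :
    Integrable fun x : ℝ => (1 + |x|) ^ (-r) := by
  simpa [Real.norm_eq_abs] using integrable_one_add_norm (E := ℝ) (by simpa)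

theorem integrable_norm_rpow_of_le_div {g : ℝ → ℂ} (hg : Measurable g) {q C : ℝ} (hq : 1 < q)
    (hbd : ∀ x, ‖g x‖ ≤ C / (1 + |x|)) :
    Integrable fun x => ‖g x‖ ^ q :=
  ((integrable_one_add_abs_rpow_neg hq).const_mul (max C 1 ^ q)).mono'
    (hg.norm.pow_const q).aestronglyMeasurable <| Eventually.of_forall fun x => by
      rw [Real.norm_of_nonneg (by positivity)]
      exact rpow_le_max_rpow_mul_rpow_neg (norm_nonneg _) (hbd x)
        (le_add_of_nonneg_right (abs_nonneg x)) (by linarith) ⟨le_rfl, le_rfl⟩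

theorem tendsto_lintegral_norm_rpow {f : ℕ → ℝ → ℂ} {g : ℝ → ℂ} {s : ℕ → ℝ → ℝ}
    {pm pP q C : ℝ} (hpm : 1 < pm) (hf : ∀ k, Measurable (f k)) (hs : ∀ k, Measurable (s k))
    (hs_mem : ∀ k x, s k x ∈ Icc pm pP) (hbd : ∀ k x, ‖f k x‖ ≤ C / (1 + |x|))
    (hfg : ∀ x, Tendsto (fun k => f k x) atTop (𝓝 (g x)))
    (hsq : ∀ x, Tendsto (fun k => s k x) atTop (𝓝 q)) :
    Tendsto (fun k => ∫⁻ x, ENNReal.ofReal (‖f k x‖ ^ s k x)) atTop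
      (𝓝 (∫⁻ x, ENNReal.ofReal (‖g x‖ ^ q))) := by
  have hq : pm ≤ q := ge_of_tendsto' (hsq 0) fun k => (hs_mem k 0).1
  refine tendsto_lintegral_of_dominated_convergence
    (fun x => ENNReal.ofReal (max C 1 ^ pP * (1 + |x|) ^ (-pm)))
    (fun k => ((hf k).norm.pow (hs k)).ennreal_ofReal)
    (fun k => Eventually.of_forall fun x => ENNReal.ofReal_le_ofReal <|
      rpow_le_max_rpow_mul_rpow_neg (norm_nonneg _) (hbd k x)
        (le_add_of_nonneg_right (abs_nonneg x)) (by linarith) (hs_mem k x))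
    ((integrable_one_add_abs_rpow_neg hpm).const_mul _).lintegral_lt_top.ne
    (Eventually.of_forall fun x => ?_)
  exact ENNReal.tendsto_ofReal (((hfg x).norm).rpow (hsq x) (Or.inr (by linarith)))

theorem vlModular_comp_sub (p : ℝ → ℝ) (f : ℝ → ℂ) (a : ℝ) :
    vlModular p (fun x => f (x - a)) = ∫⁻ x, ENNReal.ofReal (‖f x‖ ^ p (x + a)) := by
  rw [vlModular, ← lintegral_add_right_eq_self _ a]
  simp only [add_sub_cancel_right]

theorem norm_div_ofReal {z : ℂ} {l : ℝ} (hl : 0 ≤ l) : ‖z / (l : ℂ)‖ = ‖z‖ / l := by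
  rw [norm_div, Complex.norm_real, Real.norm_of_nonneg hl]

theorem lintegral_ofReal_norm_div_rpow {g : ℝ → ℂ} {q : ℝ}
    (hg : Integrable fun x => ‖g x‖ ^ q) {l : ℝ} (hl : 0 < l) :
    ∫⁻ x, ENNReal.ofReal (‖g x / (l : ℂ)‖ ^ q) =
      ENNReal.ofReal ((∫ x, ‖g x‖ ^ q) / l ^ q) := by
  simp_rw [norm_div_ofReal hl.le, Real.div_rpow (norm_nonneg _) hl.le]
  rw [← integral_div, ofReal_integral_eq_lintegral_ofReal (hg.div_const _)
    (Eventually.of_forall fun x => by positivity)]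

theorem vlModular_div_antitoneOn {p : ℝ → ℝ} (hp : ∀ x, 0 ≤ p x) (f : ℝ → ℂ) :
    AntitoneOn (fun l : ℝ => vlModular p (fun x => f x / l)) (Ioi 0) := by
  intro l hl l' hl' hll'
  refine lintegral_mono fun x => ENNReal.ofReal_le_ofReal <|
    Real.rpow_le_rpow (norm_nonneg _) ?_ (hp x)
  rw [norm_div_ofReal (le_of_lt hl), norm_div_ofReal (le_of_lt hl')]
  exact div_le_div_of_nonneg_left (norm_nonneg _) hl hll'

theorem tendsto_luxNorm_of_tendsto_vlModular {ι : Type*} {L : Filter ι} {p : ℝ → ℝ}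
    (hp : ∀ x, 0 ≤ p x) {f : ι → ℝ → ℂ} {I q : ℝ} (hI : 0 ≤ I) (hq : 0 < q)
    (hf : ∀ l : ℝ, 0 < l → Tendsto (fun k => vlModular p (fun x => f k x / l)) L
      (𝓝 (ENNReal.ofReal (I / l ^ q)))) :
    Tendsto (fun k => luxNorm p (f k)) L (𝓝 (I ^ (1 / q))) := by
  have hnorm0 : 0 ≤ I ^ (1 / q) := Real.rpow_nonneg hI _
  have hadm : ∀ l : ℝ, I ^ (1 / q) < l →
      ∀ᶠ k in L, 0 < l ∧ vlModular p (fun x => f k x / l) ≤ 1 := by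
    intro l hl
    have hl0 : 0 < l := hnorm0.trans_lt hl
    rw [one_div, Real.rpow_inv_lt_iff_of_pos hI hl0.le hq] at hl
    have hlt : ENNReal.ofReal (I / l ^ q) < 1 :=
      ENNReal.ofReal_lt_one.2 ((div_lt_one (by positivity)).2 hl)
    filter_upwards [(hf l hl0).eventually_lt_const hlt] with k hk
    exact ⟨hl0, hk.le⟩
  rw [tendsto_order]
  refine ⟨fun a ha => ?_, fun b hb => ?_⟩
  · rcases lt_or_ge a 0 with ha0 | ha0
    · exact Eventually.of_forall fun k => ha0.trans_le (Real.sInf_nonneg fun l hl => hl.1.le)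
    obtain ⟨l, hal, hlI⟩ := exists_between ha
    have hl0 : 0 < l := ha0.trans_lt hal
    rw [one_div, Real.lt_rpow_inv_iff_of_pos hl0.le hI hq] at hlI
    have hgt : 1 < ENNReal.ofReal (I / l ^ q) :=
      ENNReal.one_lt_ofReal.2 ((one_lt_div (by positivity)).2 hlI)
    -- the admissible set must be nonempty, as `sInf ∅ = 0`
    filter_upwards [(hf l hl0).eventually_const_lt hgt, hadm _ (lt_add_one _)]
      with k hk hk_ne
    refine hal.trans_le (le_csInf ⟨_, hk_ne⟩ fun b ⟨hb0, hbM⟩ => ?_)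
    by_contra! hbl
    exact (hk.trans_le (vlModular_div_antitoneOn hp (f k) hb0 hl0 hbl.le)).not_ge hbM
  · obtain ⟨l, hIl, hlb⟩ := exists_between hb
    filter_upwards [hadm l hIl] with k hk
    exact (show luxNorm p (f k) ≤ l from csInf_le ⟨0, fun _ hx => hx.1.le⟩ hk).trans_lt hlb

theorem key_lemma_translation_norms_general
    (p : ℝ → ℝ) (hpcont : Continuous p)
    (pm pP : ℝ) (hpm : 1 < pm) (hlb : ∀ x, pm ≤ p x) (hub : ∀ x, p x ≤ pP)
    (hSO : Tendsto (fun x : ℝ => oscR p (Icc (-2*x) (-x) ∪ Icc x (2*x))) atTop (nhds 0))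
    (h : ℕ → ℝ) (hh : Tendsto h atTop atTop)
    (q : ℝ) (hq1 : 1 < q) (hq : Tendsto (fun k => p (h k)) atTop (nhds q))
    (w : ℝ → ℂ) (wk : ℕ → ℝ → ℂ)
    (hwc : Continuous w) (hwkc : ∀ k, Continuous (wk k))
    (hunif : ∀ J : Set ℝ, IsCompact J → TendstoUniformlyOn (fun k x => wk k x) w atTop J)
    (C : ℝ)
    (hwbd : ∀ x, ‖w x‖ ≤ C / (1 + |x|))
    (hwkbd : ∀ k x, ‖wk k x‖ ≤ C / (1 + |x|)) :
    Tendsto (fun k => luxNorm p (fun x => wk k (x - h k))) atTop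
      (nhds ((∫ x : ℝ, ‖w x‖ ^ q) ^ (1 / q))) := by
  have hosc : ∀ t τ, |p t - p τ| ≤ pP - pm := fun t τ =>
    abs_sub_le_iff.2 ⟨by linarith [hub t, hlb τ], by linarith [hub τ, hlb t]⟩
  refine tendsto_luxNorm_of_tendsto_vlModular (fun x => by linarith [hlb x])
    (integral_nonneg fun x => by positivity) (by linarith) fun l hl => ?_
  rw [← lintegral_ofReal_norm_div_rpow
    (integrable_norm_rpow_of_le_div hwc.measurable hq1 hwbd) hl]
  simp_rw [fun k => vlModular_comp_sub p (fun y => wk k y / (l : ℂ)) (h k)]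
  refine tendsto_lintegral_norm_rpow (C := C / l) hpm
    (fun k => ((hwkc k).div_const _).measurable)
    (fun k => (hpcont.comp (continuous_add_const _)).measurable) (fun k x => ⟨hlb _, hub _⟩)
    (fun k x => ?_) (fun x => ((hunif {x} isCompact_singleton).tendsto_at rfl).div_const _)
    (tendsto_comp_add_of_tendsto_oscR hosc hSO hh hq)
  rw [norm_div_ofReal hl.le, div_right_comm]
  exact div_le_div_of_nonneg_right (hwkbd k x) hl.le

/-- Key lemma: if `p : ℝ → (1,∞)` is slowly oscillating with `1 < inf p ≤ sup p < ∞`,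
`h k → +∞` with `p (h k) → q ∈ (1,∞)`, `w_k → w` uniformly on compact sets and
`|w|, |w_k| ≤ C/(1+|x|)`, then `‖V_{h_k} w_k‖_{p(·)} → ‖w‖_{L^q(ℝ)}`,
where `(V_h f)(x) = f(x-h)`. -/
theorem key_lemma_translation_norms
    (p : ℝ → ℝ) (hpcont : Continuous p)
    (pm pP : ℝ) (hpm : 1 < pm) (hlb : ∀ x, pm ≤ p x) (hub : ∀ x, p x ≤ pP)
    (hSO : Tendsto (fun x : ℝ => oscR p (Icc (-2*x) (-x) ∪ Icc x (2*x))) atTop (nhds 0))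
    (h : ℕ → ℝ) (hh : Tendsto h atTop atTop)
    (q : ℝ) (hq1 : 1 < q) (hq : Tendsto (fun k => p (h k)) atTop (nhds q))
    (w : ℝ → ℂ) (wk : ℕ → ℝ → ℂ)
    (hwc : Continuous w) (hwkc : ∀ k, Continuous (wk k))
    (hunif : ∀ J : Set ℝ, IsCompact J → TendstoUniformlyOn (fun k x => wk k x) w atTop J)
    (C : ℝ) (hC : 0 < C)
    (hwbd : ∀ x, ‖w x‖ ≤ C / (1 + |x|))
    (hwkbd : ∀ k x, ‖wk k x‖ ≤ C / (1 + |x|)) :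
    Tendsto (fun k => luxNorm p (fun x => wk k (x - h k))) atTop
      (nhds ((∫ x : ℝ, ‖w x‖ ^ q) ^ (1 / q))) :=
  key_lemma_translation_norms_general p hpcont pm pP hpm hlb hub hSO h hh q hq1 hq w wk hwc hwkc
    hunif C hwbd hwkbd
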